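/- arXiv:2203.09334 — 2 statements merged into one kernel-verified Lean document; each statement's English description precedes it below -/
import Mathlib

section
/- Let G be a finite abelian group with |G| > 2n^2 + 2n, and let Q ⊆ G with |Q| ≤ n. For every subset P ⊆ Q there exist sets A₁, A₂ ⊆ G, each of size n, such that P ⊆ A₁ + A₂ (the sumset {a₁ + a₂ : a₁ ∈ A₁, a₂ ∈ A₂}) and (Q \ P) ∩ (A₁ + A₂) = ∅. -/
/-!
Start from `A₁ = {0}` and `A₂ = P`, whose sumset `P` already misses `Q \ P`, and enlarge the two
sets greedily. A new element `x` of `A₁` only creates the sums `x + A₂`, so it merely has to avoid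
`A₁ ∪ ((Q \ P) - A₂)`, a set of at most `n + n²` elements; symmetrically for `A₂`.
-/

open Finset Pointwise

section GreedyExtension

variable {G : Type*} [AddCommGroup G] [Fintype G] [DecidableEq G]

lemma exists_notMem_disjoint_insert_add {A B S : Finset G}
    (hcard : #A + #S * #B < Fintype.card G) (hAB : Disjoint (A + B) S) :
    ∃ x ∉ A, Disjoint (insert x A + B) S := by
  have hsmall : #(A ∪ (S - B)) < Fintype.card G :=
    calc #(A ∪ (S - B)) ≤ #A + #(S - B) := card_union_le _ _
      _ ≤ #A + #S * #B := by gcongr; exact card_sub_le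
      _ < Fintype.card G := hcard
  obtain ⟨x, hx⟩ : (A ∪ (S - B))ᶜ.Nonempty := by
    rw [← card_pos, card_compl]; omega
  simp only [mem_compl, mem_union, not_or] at hx
  obtain ⟨hxA, hxSB⟩ := hx
  refine ⟨x, hxA, disjoint_left.2 ?_⟩
  rintro _ hsum hS
  obtain ⟨a, ha, b, hb, rfl⟩ := mem_add.1 hsum
  rcases mem_insert.1 ha with rfl | ha
  · exact hxSB (mem_sub.2 ⟨_, hS, b, hb, add_sub_cancel_right a b⟩)
  · exact disjoint_left.1 hAB (add_mem_add ha hb) hS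

lemma exists_superset_card_eq_disjoint_add {A B S : Finset G} {m : ℕ} (hAm : #A ≤ m)
    (hm : m + #S * #B ≤ Fintype.card G) (hAB : Disjoint (A + B) S) :
    ∃ A' ⊇ A, #A' = m ∧ Disjoint (A' + B) S := by
  induction m generalizing A with
  | zero => exact ⟨A, subset_rfl, by omega, hAB⟩
  | succ m ih =>
    rcases hAm.lt_or_eq with hlt | heq
    · obtain ⟨A', hAA', hA'm, hA'B⟩ := ih (by omega) (by omega) hAB
      obtain ⟨x, hxA', hx⟩ := exists_notMem_disjoint_insert_add (by omega) hA'B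
      exact ⟨insert x A', hAA'.trans (subset_insert _ _),
        by rw [card_insert_of_notMem hxA', hA'm], hx⟩
    · exact ⟨A, subset_rfl, heq, hAB⟩

end GreedyExtension

theorem stmt_0 {G : Type*} [AddCommGroup G] [Fintype G] [DecidableEq G]
    (n : ℕ) (hn : 0 < n) (hG : Fintype.card G > 2 * n ^ 2 + 2 * n)
    (Q : Finset G) (hQ : Q.card ≤ n) (P : Finset G) (hP : P ⊆ Q) :
    ∃ A₁ A₂ : Finset G, A₁.card = n ∧ A₂.card = n ∧
      ↑P ⊆ A₁ + A₂ ∧ (Q \ P) ∩ (A₁ + A₂) = ∅ := by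
  have hS : #(Q \ P) ≤ n := (card_le_card sdiff_subset).trans hQ
  have hPn : #P ≤ n := (card_le_card hP).trans hQ
  have hroom : n + #(Q \ P) * n ≤ Fintype.card G := by nlinarith
  have h0P : Disjoint (0 + P) (Q \ P) := by rw [zero_add]; exact disjoint_sdiff
  obtain ⟨A₁, h0A₁, hA₁, hA₁P⟩ := exists_superset_card_eq_disjoint_add (card_zero.trans_le hn)
    (hroom.trans' (by gcongr)) h0P
  rw [add_comm] at hA₁P
  obtain ⟨A₂, hPA₂, hA₂, hA₂A₁⟩ := exists_superset_card_eq_disjoint_add hPn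
    (by rwa [hA₁]) hA₁P
  rw [add_comm] at hA₂A₁
  refine ⟨A₁, A₂, hA₁, hA₂, ?_, disjoint_iff_inter_eq_empty.1 hA₂A₁.symm⟩
  calc (P : Set G) = ↑(0 + P) := by rw [zero_add]
    _ ⊆ ↑(A₁ + A₂) := coe_subset.2 (add_subset_add h0A₁ hPA₂)
end

section
/- Let G be a finite abelian group with |G| > 2n² + 2n, and let Q ⊆ G with |Q| = m ≤ n. There exists a probability distribution D over pairs (A₁, A₂) of subsets of G such that the m events {q ∈ A₁ + A₂} for q ∈ Q are mutually independent and each has probability exactly 1/2 under D. -/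
/-!
Every pattern `P ⊆ Q` is realised by a pair `(A₁, A₂)` with `(A₁ + A₂) ∩ Q = P`: add the elements
of `P` one at a time, each as `x + (a - x)` for an `x` chosen so that the new sums `x + A₂` and
`A₁ + (a - x)` miss `Q`; at most `2|Q|²` values of `x` are forbidden. Choosing `P ⊆ Q` uniformly and
taking its realising pair gives the distribution: the memberships `q ∈ A₁ + A₂`, `q ∈ Q`, are
those of a uniformly random subset of `Q`, i.e. independent fair coins.
-/

open Finset Pointwise

namespace Finset

variable {α : Type*} [DecidableEq α]

theorem insert_add_insert_inter_eq [Add α] {A₁ A₂ Q : Finset α} {x y : α}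
    (hx : ∀ v ∈ A₂, x + v ∉ Q) (hy : ∀ u ∈ A₁, u + y ∉ Q) (hxy : x + y ∈ Q) :
    (insert x A₁ + insert y A₂) ∩ Q = insert (x + y) ((A₁ + A₂) ∩ Q) := by
  ext z
  simp only [mem_inter, mem_add, mem_insert, exists_eq_or_imp]
  constructor
  · rintro ⟨(rfl | ⟨v, hv, rfl⟩) | ⟨u, hu, (rfl | ⟨v, hv, rfl⟩)⟩, hz⟩
    · exact .inl rfl
    · exact absurd hz (hx v hv)
    · exact absurd hz (hy u hu)
    · exact .inr ⟨⟨u, hu, v, hv, rfl⟩, hz⟩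
  · rintro (rfl | ⟨⟨u, hu, v, hv, rfl⟩, hz⟩)
    · exact ⟨.inl (.inl rfl), hxy⟩
    · exact ⟨.inr ⟨u, hu, .inr ⟨v, hv, rfl⟩⟩, hz⟩

theorem forall_decide_mem_eq_iff {S X : Finset α} {ε : α → Bool} :
    (∀ q ∈ S, decide (q ∈ X) = ε q) ↔ X ∩ S = {q ∈ S | ε q} := by
  simp only [Finset.ext_iff, mem_inter, mem_filter]
  constructor
  · intro h q
    by_cases hq : q ∈ S
    · simp [hq, ← h q hq]
    · simp [hq]
  · intro h q hq
    cases hε : ε q <;> simpa [hq, hε] using h q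

theorem card_powerset_filter_inter_eq {Q S F : Finset α} (hS : S ⊆ Q) (hF : F ⊆ S) :
    #{P ∈ Q.powerset | P ∩ S = F} = 2 ^ (#Q - #S) := by
  rw [← card_sdiff_of_subset hS, ← card_powerset]
  refine card_bij' (fun P _ => P \ S) (fun R _ => R ∪ F) ?_ ?_ ?_ ?_
  · intro P hP
    rw [mem_filter, mem_powerset] at hP
    exact mem_powerset.2 (sdiff_subset_sdiff hP.1 Subset.rfl)
  · intro R hR
    rw [mem_powerset, subset_sdiff] at hR
    rw [mem_filter, mem_powerset, union_inter_distrib_right,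
      disjoint_iff_inter_eq_empty.1 hR.2, empty_union, inter_eq_left.2 hF]
    exact ⟨union_subset hR.1 (hF.trans hS), rfl⟩
  · intro P hP
    rw [mem_filter] at hP
    rw [← hP.2, sdiff_union_inter]
  · intro R hR
    rw [mem_powerset, subset_sdiff] at hR
    rw [union_sdiff_distrib, hR.2.sdiff_eq_left, sdiff_eq_empty_iff_subset.2 hF, union_empty]

end Finset

section SumsetPattern

variable {G : Type*} [AddCommGroup G] [Fintype G] [DecidableEq G] {Q A₁ A₂ : Finset G}

theorem exists_forall_add_notMem (hQ : 2 * #Q ^ 2 < Fintype.card G) (h₁ : #A₁ ≤ #Q)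
    (h₂ : #A₂ ≤ #Q) (a : G) : ∃ x, (∀ v ∈ A₂, x + v ∉ Q) ∧ ∀ u ∈ A₁, u + (a - x) ∉ Q := by
  -- `x + v = q` puts `x` in `Q - A₂`, and `u + (a - x) = q` puts it in `A₁ - Q + {a}`.
  have hcard : #((Q - A₂) ∪ (A₁ - Q + {a})) < #(univ : Finset G) := calc
    _ ≤ #Q * #A₂ + #A₁ * #Q := by
      grw [card_union_le, card_sub_le, card_add_singleton, card_sub_le]
    _ ≤ 2 * #Q ^ 2 := by nlinarith
    _ < _ := hQ
  obtain ⟨x, -, hx⟩ := exists_mem_notMem_of_card_lt_card hcard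
  simp only [mem_union, not_or, mem_sub, mem_add, mem_singleton] at hx
  refine ⟨x, fun v hv hq => hx.1 ⟨_, hq, v, hv, add_sub_cancel_right x v⟩,
    fun u hu hq => hx.2 ⟨_, ⟨u, hu, _, hq, rfl⟩, a, rfl, ?_⟩⟩
  abel

theorem exists_add_inter_eq (hQ : 2 * #Q ^ 2 < Fintype.card G) {P : Finset G} (hP : P ⊆ Q) :
    ∃ A₁ A₂ : Finset G, (A₁ + A₂) ∩ Q = P ∧ #A₁ ≤ #P ∧ #A₂ ≤ #P := by
  induction P using Finset.induction_on with
  | empty => exact ⟨∅, ∅, by simp⟩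
  | insert a s has ih =>
    rw [insert_subset_iff] at hP
    obtain ⟨A₁, A₂, hA, h₁, h₂⟩ := ih hP.2
    have hs := card_le_card hP.2
    obtain ⟨x, hx, hy⟩ := exists_forall_add_notMem hQ (h₁.trans hs) (h₂.trans hs) a
    refine ⟨insert x A₁, insert (a - x) A₂, ?_, ?_, ?_⟩
    · rw [insert_add_insert_inter_eq hx hy (by rw [add_sub_cancel]; exact hP.1), add_sub_cancel,
        hA]
    all_goals grw [card_insert_le, card_insert_of_notMem has, ‹#_ ≤ #s›]

end SumsetPattern

section UniformPushforward

variable {β γ : Type*} [DecidableEq γ]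

noncomputable def uniformPushforward (s : Finset β) (f : β → γ) (c : γ) : ℝ :=
  ∑ b ∈ s, if f b = c then (#s : ℝ)⁻¹ else 0

theorem uniformPushforward_nonneg (s : Finset β) (f : β → γ) (c : γ) :
    0 ≤ uniformPushforward s f c :=
  sum_nonneg fun _ _ => by positivity

theorem sum_uniformPushforward (s : Finset β) (f : β → γ) (T : Finset γ) :
    ∑ c ∈ T, uniformPushforward s f c = #{b ∈ s | f b ∈ T} / #s := by
  simp only [uniformPushforward]
  rw [sum_comm, div_eq_mul_inv, ← nsmul_eq_mul, ← sum_const, sum_filter]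
  simp

theorem sum_uniformPushforward_powerset_filter_forall_decide_mem_eq {α : Type*} [DecidableEq α]
    [Fintype γ] {Q S : Finset α} (hS : S ⊆ Q) {f : Finset α → γ} {σ : γ → Finset α}
    (hσ : ∀ P ⊆ Q, σ (f P) ∩ Q = P) (ε : α → Bool) :
    ∑ c ∈ univ.filter (fun c => ∀ q ∈ S, decide (q ∈ σ c) = ε q),
      uniformPushforward Q.powerset f c = (1 / 2) ^ #S := by
  have hpattern :
      {P ∈ Q.powerset | f P ∈ univ.filter (fun c => ∀ q ∈ S, decide (q ∈ σ c) = ε q)} =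
        {P ∈ Q.powerset | P ∩ S = {q ∈ S | ε q}} := by
    refine filter_congr fun P hP => ?_
    have hS_inter : σ (f P) ∩ S = P ∩ S := by
      conv_rhs => rw [← hσ P (mem_powerset.1 hP)]
      rw [inter_assoc, inter_eq_right.2 hS]
    simp only [mem_filter, mem_univ, true_and, forall_decide_mem_eq_iff, hS_inter]
  rw [sum_uniformPushforward, hpattern, card_powerset_filter_inter_eq hS (filter_subset _ _),
    card_powerset, ← Nat.sub_add_cancel (card_le_card hS), Nat.add_sub_cancel]
  push_cast
  rw [pow_add, div_mul_cancel_left₀ (by positivity), one_div, inv_pow]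

end UniformPushforward

theorem stmt_17_general {G : Type*} [AddCommGroup G] [Fintype G] [DecidableEq G]
    (n m : ℕ) (hG : Fintype.card G > 2 * n ^ 2 + 2 * n)
    (Q : Finset G) (hQ : Q.card = m) (hm : m ≤ n) :
    ∃ D : Finset G × Finset G → ℝ,
      (∀ p, 0 ≤ D p) ∧ (∑ p : Finset G × Finset G, D p = 1) ∧
      (∀ q ∈ Q, ∑ p ∈ Finset.univ.filter (fun p : Finset G × Finset G => q ∈ p.1 + p.2), D p
          = 1 / 2) ∧
      (∀ S ⊆ Q, ∀ ε : G → Bool,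
        ∑ p ∈ Finset.univ.filter
            (fun p : Finset G × Finset G => ∀ q ∈ S, decide (q ∈ p.1 + p.2) = ε q), D p
          = (1 / 2) ^ S.card) := by
  have hQG : 2 * #Q ^ 2 < Fintype.card G := by subst hQ; nlinarith
  choose! A₁ A₂ hA _ _ using fun P (hP : P ⊆ Q) => exists_add_inter_eq hQG hP
  have hevent (S : Finset G) (hS : S ⊆ Q) (ε : G → Bool) :=
    sum_uniformPushforward_powerset_filter_forall_decide_mem_eq hS
      (f := fun P => (A₁ P, A₂ P)) (σ := fun p => p.1 + p.2) hA ε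
  refine ⟨uniformPushforward Q.powerset fun P => (A₁ P, A₂ P), uniformPushforward_nonneg _ _,
    ?_, fun q hq => ?_, fun S hS ε => ?_⟩
  · simpa using hevent ∅ (empty_subset Q) fun _ => true
  · simpa using hevent {q} (singleton_subset_iff.2 hq) fun _ => true
  -- The statement decides `∀ q ∈ S` through `Fintype G`, the lemma through membership in `S`.
  · convert hevent S hS ε using 3

theorem stmt_17 {G : Type*} [AddCommGroup G] [Fintype G] [DecidableEq G]
    (n m : ℕ) (hn : 0 < n) (hG : Fintype.card G > 2 * n ^ 2 + 2 * n)
    (Q : Finset G) (hQ : Q.card = m) (hm : m ≤ n) :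
    ∃ D : Finset G × Finset G → ℝ,
      (∀ p, 0 ≤ D p) ∧ (∑ p : Finset G × Finset G, D p = 1) ∧
      (∀ q ∈ Q, ∑ p ∈ Finset.univ.filter (fun p : Finset G × Finset G => q ∈ p.1 + p.2), D p
          = 1 / 2) ∧
      (∀ S ⊆ Q, ∀ ε : G → Bool,
        ∑ p ∈ Finset.univ.filter
            (fun p : Finset G × Finset G => ∀ q ∈ S, decide (q ∈ p.1 + p.2) = ε q), D p
          = (1 / 2) ^ S.card) :=
  stmt_17_general n m hG Q hQ hm
end
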